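/- Let F be a face of a triangulation whose z-monodromy M_F is of type (M6), i.e., M_F = (−e₁, e₃, e₂)(−e₂, −e₃, e₁) where (e₁,e₂,e₃) is a cycle of D_F. Then for every z-orientation of the triangulation, the face F is of type I. -/

import Mathlib

open scoped Classical

noncomputable section

/-- An abstract (combinatorial) triangulation of a closed surface:
finitely many vertices, edges and faces; every edge has two endpoints,
every face has three sides, and every edge lies on exactly two faces. -/
structure Triang where
  V : Type
  E : Type
  F : Type
  [fV : Fintype V]
  [fE : Fintype E]
  [fF : Fintype F]
  [dV : DecidableEq V]
  [dE : DecidableEq E]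
  [dF : DecidableEq F]
  ends : E → Finset V
  ends_card : ∀ e, (ends e).card = 2
  sides : F → Finset E
  sides_card : ∀ f, (sides f).card = 3
  two_faces : ∀ e, (Finset.univ.filter fun f => e ∈ sides f).card = 2

attribute [instance] Triang.fV Triang.fE Triang.fF Triang.dV Triang.dE Triang.dF

/-- A zigzag, presented as a periodic bi-infinite sequence of directed edge
traversals (edge, tail, head) together with the face carrying each
consecutive pair, of minimal period `n`. -/
structure Zigzag (T : Triang) where
  n : ℕ
  npos : 0 < n
  edge : ℤ → T.E
  tail : ℤ → T.V
  head : ℤ → T.V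
  face : ℤ → T.F
  per_edge : ∀ i, edge (i + n) = edge i
  per_tail : ∀ i, tail (i + n) = tail i
  per_head : ∀ i, head (i + n) = head i
  per_face : ∀ i, face (i + n) = face i
  mem_tail : ∀ i, tail i ∈ T.ends (edge i)
  mem_head : ∀ i, head i ∈ T.ends (edge i)
  tail_ne_head : ∀ i, tail i ≠ head i
  link : ∀ i, head i = tail (i + 1)
  edge_mem : ∀ i, edge i ∈ T.sides (face i)
  edge_succ_mem : ∀ i, edge (i + 1) ∈ T.sides (face i)
  edge_ne_succ : ∀ i, edge i ≠ edge (i + 1)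
  face_ne_succ : ∀ i, face i ≠ face (i + 1)
  disjoint_two : ∀ i, T.ends (edge i) ∩ T.ends (edge (i + 2)) = ∅
  minimal : ∀ m : ℕ, 0 < m → (∀ i, edge (i + m) = edge i) → n ≤ m

variable {T : Triang}

/-- Number of occurrences of an edge in one period of a zigzag. -/
def Zigzag.count (Z : Zigzag T) (e : T.E) : ℕ :=
  ((Finset.range Z.n).filter fun i => Z.edge i = e).card

/-- Two zigzags are equal as cyclic sequences (equal up to a shift). -/
def CyclicEq (Z Z' : Zigzag T) : Prop :=
  ∃ k : ℤ, (∀ i, Z'.edge i = Z.edge (i + k)) ∧ (∀ i, Z'.tail i = Z.tail (i + k)) ∧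
    (∀ i, Z'.head i = Z.head (i + k))

/-- `Z'` is the reversal of `Z` (as cyclic sequences, i.e. up to a shift). -/
def IsReversal (Z Z' : Zigzag T) : Prop :=
  ∃ k : ℤ, (∀ i, Z'.edge i = Z.edge (k - i)) ∧ (∀ i, Z'.tail i = Z.head (k - i)) ∧
    (∀ i, Z'.head i = Z.tail (k - i))

/-- A z-orientation: a collection of zigzags which double covers the edges
(each edge is traversed exactly twice in total). -/
structure ZOrientation (T : Triang) where
  zz : List (Zigzag T)
  covers : ∀ e : T.E, (zz.map fun Z => Z.count e).sum = 2

/-- The multiset of directed traversals of an edge by the zigzags of `τ`. -/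
def ZOrientation.travs (τ : ZOrientation T) (e : T.E) : Multiset (T.V × T.V) :=
  (τ.zz.map fun Z =>
    Multiset.ofList
      (((List.range Z.n).filter fun i => Z.edge i = e).map
        fun i => (Z.tail i, Z.head i))).sum

/-- Type II edge: the two traversals from `τ` go in the same direction. -/
def ZOrientation.TypeII (τ : ZOrientation T) (e : T.E) : Prop :=
  ∃ v w : T.V, τ.travs e = {(v, w), (v, w)}

/-- Type I edge: the two traversals from `τ` go in different directions. -/
def ZOrientation.TypeI (τ : ZOrientation T) (e : T.E) : Prop :=
  ∃ v w : T.V, τ.travs e = {(v, w), (w, v)} ∧ v ≠ w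

/-- The direction of a type II edge: both traversals go from `v` to `w`. -/
def ZOrientation.DirII (τ : ZOrientation T) (e : T.E) (v w : T.V) : Prop :=
  τ.travs e = {(v, w), (v, w)}

/-- Face of type I: exactly one side of type II (and every side has a type). -/
def ZOrientation.FaceTypeI (τ : ZOrientation T) (f : T.F) : Prop :=
  ((T.sides f).filter fun e => τ.TypeII e).card = 1 ∧
    ∀ e ∈ T.sides f, τ.TypeI e ∨ τ.TypeII e

/-- Face of type II: all three sides of type II. -/
def ZOrientation.FaceTypeII (τ : ZOrientation T) (f : T.F) : Prop :=
  ∀ e ∈ T.sides f, τ.TypeII e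

/-- Vertex of type I: incident only to edges of type I. -/
def ZOrientation.VertexTypeI (τ : ZOrientation T) (v : T.V) : Prop :=
  ∀ e : T.E, v ∈ T.ends e → τ.TypeI e

/-- A zigzag is homogeneous: after each type II edge there follow exactly
two type I edges before the next type II edge, and type II edges occur. -/
def ZOrientation.Homogeneous (τ : ZOrientation T) (Z : Zigzag T) : Prop :=
  (∃ i : ℤ, τ.TypeII (Z.edge i)) ∧
    ∀ i : ℤ, τ.TypeII (Z.edge i) →
      τ.TypeI (Z.edge (i + 1)) ∧ τ.TypeI (Z.edge (i + 2)) ∧ τ.TypeII (Z.edge (i + 3))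

/-- Vertices of a face. -/
def faceVerts (T : Triang) (f : T.F) : Finset T.V :=
  (T.sides f).biUnion T.ends

/-- The edges of the link cycle `C(v)`: in each face containing `v`,
the edge opposite to `v`. -/
def oppEdges (T : Triang) (v : T.V) : Finset T.E :=
  Finset.univ.filter fun e =>
    ∃ f : T.F, e ∈ T.sides f ∧ v ∈ faceVerts T f ∧ v ∉ T.ends e

/-- A finite edge set forms a single directed cycle with respect to the
τ-directions of its (type II) edges. -/
def ZOrientation.IsDirCycle (τ : ZOrientation T) (S : Finset T.E) : Prop :=
  ∃ (m : ℕ) (c : ℤ → T.E) (w : ℤ → T.V), 0 < m ∧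
    (∀ i, c (i + m) = c i) ∧ (∀ i, w (i + m) = w i) ∧
    (∀ i j : ℤ, 0 ≤ i → i < j → j < m → c i ≠ c j) ∧
    (∀ e ∈ S, ∃ i : ℤ, c i = e) ∧ (∀ i, c i ∈ S) ∧
    (∀ i, τ.DirII (c i) (w i) (w (i + 1)))

/-- An oriented edge (a traversal direction of an edge). -/
structure OSide (T : Triang) where
  e : T.E
  a : T.V
  b : T.V

/-- Negation (reversal) of an oriented edge. -/
def OSide.neg {T : Triang} (u : OSide T) : OSide T := ⟨u.e, u.b, u.a⟩

/-- `u` belongs to `Ω(f)`, the six oriented edges of the face `f`. -/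
def InOmega (T : Triang) (f : T.F) (u : OSide T) : Prop :=
  u.e ∈ T.sides f ∧ T.ends u.e = {u.a, u.b} ∧ u.a ≠ u.b

/-- The rotation `D_F` of `Ω(f)`: `u' = D_F u` iff `u, u'` are distinct
oriented sides of `f` with the head of `u` equal to the tail of `u'`. -/
def DRel (T : Triang) (f : T.F) (u u' : OSide T) : Prop :=
  InOmega T f u ∧ InOmega T f u' ∧ u.e ≠ u'.e ∧ u.b = u'.a

/-- The zigzag `Z` traverses the oriented edge `u` at position `i`. -/
def Trav {T : Triang} (Z : Zigzag T) (i : ℤ) (u : OSide T) : Prop :=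
  Z.edge i = u.e ∧ Z.tail i = u.a ∧ Z.head i = u.b

/-- The z-monodromy relation of the face `f`: `u'` is the first oriented edge
of `f` occurring after `u` in the zigzag containing `D_F⁻¹(u), u`. -/
def MRel (T : Triang) (f : T.F) (u u' : OSide T) : Prop :=
  InOmega T f u ∧ InOmega T f u' ∧
  ∃ (Z : Zigzag T) (u₀ : OSide T) (i j : ℤ),
    DRel T f u₀ u ∧ Trav Z (i - 1) u₀ ∧ Trav Z i u ∧
    i < j ∧ Trav Z j u' ∧ ∀ k : ℤ, i < k → k < j → Z.edge k ∉ T.sides f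

/-- The z-monodromy of `f` is of type (M6):
`M_F = (−e₁,e₃,e₂)(−e₂,−e₃,e₁)` for a cycle `(e₁,e₂,e₃)` of `D_F`. -/
def IsM6 (T : Triang) (f : T.F) : Prop :=
  ∃ u₁ u₂ u₃ : OSide T, DRel T f u₁ u₂ ∧ DRel T f u₂ u₃ ∧ DRel T f u₃ u₁ ∧
    ∀ u u' : OSide T, InOmega T f u → InOmega T f u' →
      (MRel T f u u' ↔
        ((u = u₁.neg ∧ u' = u₃) ∨ (u = u₃ ∧ u' = u₂) ∨ (u = u₂ ∧ u' = u₁.neg) ∨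
         (u = u₂.neg ∧ u' = u₃.neg) ∨ (u = u₃.neg ∧ u' = u₁) ∨ (u = u₁ ∧ u' = u₂.neg)))

/-- The z-monodromy of `f` is of type (M7):
`M_F = (e₁,e₂)(−e₁,−e₂)` with `e₃, −e₃` fixed. -/
def IsM7 (T : Triang) (f : T.F) : Prop :=
  ∃ u₁ u₂ u₃ : OSide T, DRel T f u₁ u₂ ∧ DRel T f u₂ u₃ ∧ DRel T f u₃ u₁ ∧
    ∀ u u' : OSide T, InOmega T f u → InOmega T f u' →
      (MRel T f u u' ↔
        ((u = u₁ ∧ u' = u₂) ∨ (u = u₂ ∧ u' = u₁) ∨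
         (u = u₁.neg ∧ u' = u₂.neg) ∨ (u = u₂.neg ∧ u' = u₁.neg) ∨
         (u = u₃ ∧ u' = u₃) ∨ (u = u₃.neg ∧ u' = u₃.neg)))


namespace M6

variable {T : Triang}

/-- The oriented side traversed by `Z` at position `i`. -/
def zt (Z : Zigzag T) (i : ℤ) : OSide T := ⟨Z.edge i, Z.tail i, Z.head i⟩

@[simp] lemma zt_e (Z : Zigzag T) (i : ℤ) : (zt Z i).e = Z.edge i := rfl
@[simp] lemma zt_a (Z : Zigzag T) (i : ℤ) : (zt Z i).a = Z.tail i := rfl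
@[simp] lemma zt_b (Z : Zigzag T) (i : ℤ) : (zt Z i).b = Z.head i := rfl

lemma per_int {α : Type*} (g : ℤ → α) (n : ℕ) (hg : ∀ i, g (i + n) = g i) :
    ∀ (k i : ℤ), g (i + k * n) = g i := by
  intro k
  induction k using Int.induction_on with
  | zero => simp
  | succ k ih =>
      intro i
      have h1 : i + ((k : ℤ) + 1) * n = (i + k * n) + n := by ring
      rw [h1, hg, ih]
  | pred k ih =>
      intro i
      have h1 : i + (-(k : ℤ) - 1) * n + n = i + (-(k : ℤ)) * n := by ring
      have := hg (i + (-(k : ℤ) - 1) * n)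
      rw [h1] at this
      rw [← ih i, ← this]

lemma per_emod {α : Type*} (g : ℤ → α) (n : ℕ) (hg : ∀ i, g (i + n) = g i) (i : ℤ) :
    g i = g (i % n) := by
  conv_lhs => rw [← Int.emod_add_mul_ediv i n]
  rw [show i % (n : ℤ) + (n : ℤ) * (i / n) = i % n + (i / n) * n by ring]
  exact per_int g n hg _ _

lemma zt_per (Z : Zigzag T) (i : ℤ) : zt Z (i + Z.n) = zt Z i := by
  unfold zt; rw [Z.per_edge, Z.per_tail, Z.per_head]

lemma zt_emod (Z : Zigzag T) (i : ℤ) : zt Z i = zt Z (i % Z.n) :=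
  per_emod (zt Z) Z.n (zt_per Z) i

lemma face_emod (Z : Zigzag T) (i : ℤ) : Z.face i = Z.face (i % Z.n) :=
  per_emod Z.face Z.n Z.per_face i

/-- sums of mapped lists of naturals -/
lemma sum_map_add {β : Type*} (l : List β) (g g2 : β → ℕ) :
    (l.map fun x => g x + g2 x).sum = (l.map g).sum + (l.map g2).sum := by
  induction l with
  | nil => simp
  | cons a t ih => simp [ih]; ring

lemma le_sum_of_mem {l : List ℕ} {a : ℕ} (h : a ∈ l) : a ≤ l.sum :=
  List.single_le_sum (fun x _ => Nat.zero_le x) a h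

lemma pos_summand {l : List ℕ} (h : 0 < l.sum) : ∃ a ∈ l, 0 < a := by
  by_contra hc
  push_neg at hc
  have : l.sum = 0 := by
    apply List.sum_eq_zero
    intro x hx
    exact Nat.le_zero.mp (hc x hx)
  omega

lemma count_list_sum {β : Type*} (l : List β) (g : β → Multiset (T.V × T.V)) (d : T.V × T.V) :
    Multiset.count d (l.map g).sum = (l.map fun x => Multiset.count d (g x)).sum := by
  induction l with
  | nil => simp
  | cons a t ih => simp [ih]

lemma card_list_sum {β : Type*} (l : List β) (g : β → Multiset (T.V × T.V)) :
    Multiset.card (l.map g).sum = (l.map fun x => Multiset.card (g x)).sum := by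
  induction l with
  | nil => simp
  | cons a t ih => simp [ih]

/-- endpoints of a traversed edge -/
lemma ends_pair (Z : Zigzag T) (i : ℤ) :
    T.ends (Z.edge i) = {Z.tail i, Z.head i} := by
  have hsub : ({Z.tail i, Z.head i} : Finset T.V) ⊆ T.ends (Z.edge i) := by
    intro v hv
    rcases Finset.mem_insert.mp hv with h | h
    · exact h ▸ Z.mem_tail i
    · exact (Finset.mem_singleton.mp h) ▸ Z.mem_head i
  have hcard : ({Z.tail i, Z.head i} : Finset T.V).card = 2 := by
    rw [Finset.card_insert_of_notMem (by simp [Z.tail_ne_head i]), Finset.card_singleton]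
  exact (Finset.eq_of_subset_of_card_le hsub (by rw [T.ends_card, hcard])).symm

/-- the two faces dichotomy at a position traversing a side of `f` -/
lemma face_or (f : T.F) (Z : Zigzag T) (i : ℤ) (hi : Z.edge i ∈ T.sides f) :
    (Z.face i = f ∧ Z.face (i - 1) ≠ f) ∨ (Z.face (i - 1) = f ∧ Z.face i ≠ f) := by
  have h1 : Z.edge i ∈ T.sides (Z.face i) := Z.edge_mem i
  have h2 : Z.edge i ∈ T.sides (Z.face (i - 1)) := by
    have := Z.edge_succ_mem (i - 1)
    simpa using this
  have hne : Z.face (i - 1) ≠ Z.face i := by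
    have := Z.face_ne_succ (i - 1)
    simpa using this
  have hsub : ({Z.face i, Z.face (i - 1)} : Finset T.F) ⊆
      Finset.univ.filter (fun g => Z.edge i ∈ T.sides g) := by
    intro g hg
    rcases Finset.mem_insert.mp hg with h | h
    · subst h; simp [h1]
    · rw [Finset.mem_singleton.mp h]; simp [h2]
  have hcard : ({Z.face i, Z.face (i - 1)} : Finset T.F).card = 2 := by
    rw [Finset.card_insert_of_notMem (by simp [Ne.symm hne]), Finset.card_singleton]
  have heq : Finset.univ.filter (fun g => Z.edge i ∈ T.sides g) =
      {Z.face i, Z.face (i - 1)} :=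
    (Finset.eq_of_subset_of_card_le hsub (by rw [T.two_faces, hcard])).symm
  have hf : f ∈ ({Z.face i, Z.face (i - 1)} : Finset T.F) := by
    rw [← heq]; simp [hi]
  rcases Finset.mem_insert.mp hf with h | h
  · exact Or.inl ⟨h.symm, fun hc => hne (by rw [hc, h])⟩
  · rw [Finset.mem_singleton] at h
    exact Or.inr ⟨h.symm, fun hc => hne (by rw [hc, h])⟩

end M6

namespace M6

variable {T : Triang}

@[simp] lemma neg_e (u : OSide T) : u.neg.e = u.e := rfl
@[simp] lemma neg_a (u : OSide T) : u.neg.a = u.b := rfl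
@[simp] lemma neg_b (u : OSide T) : u.neg.b = u.a := rfl

lemma oside_ext {u v : OSide T} (h1 : u.e = v.e) (h2 : u.a = v.a) (h3 : u.b = v.b) :
    u = v := by cases u; cases v; simp_all

lemma pair_eq {V : Type*} [DecidableEq V] {a b c d : V}
    (h : ({a, b} : Finset V) = {c, d}) (hab : a ≠ b) :
    (a = c ∧ b = d) ∨ (a = d ∧ b = c) := by
  have ha : a = c ∨ a = d := by
    have : a ∈ ({c, d} : Finset V) := h ▸ (by simp)
    simpa using this
  have hb : b = c ∨ b = d := by
    have : b ∈ ({c, d} : Finset V) := h ▸ (by simp)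
    simpa using this
  rcases ha with h1 | h1 <;> rcases hb with h2 | h2
  · exact absurd (h1.trans h2.symm) hab
  · exact Or.inl ⟨h1, h2⟩
  · exact Or.inr ⟨h1, h2⟩
  · exact absurd (h1.trans h2.symm) hab

/-- The context of a face: a `D_F`-cycle of its three oriented sides. -/
structure Ctx (T : Triang) where
  f : T.F
  u₁ : OSide T
  u₂ : OSide T
  u₃ : OSide T
  d12 : DRel T f u₁ u₂
  d23 : DRel T f u₂ u₃
  d31 : DRel T f u₃ u₁

variable (C : Ctx T)

lemma in1 : InOmega T C.f C.u₁ := C.d12.1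
lemma in2 : InOmega T C.f C.u₂ := C.d23.1
lemma in3 : InOmega T C.f C.u₃ := C.d31.1
lemma b1 : C.u₁.b = C.u₂.a := C.d12.2.2.2
lemma b2 : C.u₂.b = C.u₃.a := C.d23.2.2.2
lemma b3 : C.u₃.b = C.u₁.a := C.d31.2.2.2
lemma nee12 : C.u₁.e ≠ C.u₂.e := C.d12.2.2.1
lemma nee23 : C.u₂.e ≠ C.u₃.e := C.d23.2.2.1
lemma nee31 : C.u₃.e ≠ C.u₁.e := C.d31.2.2.1
lemma nee13 : C.u₁.e ≠ C.u₃.e := (nee31 C).symm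
lemma na12 : C.u₁.a ≠ C.u₂.a := by
  have := (in1 C).2.2; rwa [b1 C] at this
lemma na23 : C.u₂.a ≠ C.u₃.a := by
  have := (in2 C).2.2; rwa [b2 C] at this
lemma na31 : C.u₃.a ≠ C.u₁.a := by
  have := (in3 C).2.2; rwa [b3 C] at this
lemma ends1 : T.ends C.u₁.e = {C.u₁.a, C.u₂.a} := by
  have := (in1 C).2.1; rwa [b1 C] at this
lemma ends2 : T.ends C.u₂.e = {C.u₂.a, C.u₃.a} := by
  have := (in2 C).2.1; rwa [b2 C] at this
lemma ends3 : T.ends C.u₃.e = {C.u₃.a, C.u₁.a} := by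
  have := (in3 C).2.1; rwa [b3 C] at this

lemma sides_eq : T.sides C.f = {C.u₁.e, C.u₂.e, C.u₃.e} := by
  have hsub : ({C.u₁.e, C.u₂.e, C.u₃.e} : Finset T.E) ⊆ T.sides C.f := by
    intro e he
    rcases Finset.mem_insert.mp he with h | h
    · exact h ▸ (in1 C).1
    rcases Finset.mem_insert.mp h with h | h
    · exact h ▸ (in2 C).1
    · exact (Finset.mem_singleton.mp h) ▸ (in3 C).1
  have hcard : ({C.u₁.e, C.u₂.e, C.u₃.e} : Finset T.E).card = 3 := by
    rw [Finset.card_insert_of_notMem (by simp [nee12 C, nee13 C]),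
      Finset.card_insert_of_notMem (by simp [nee23 C]), Finset.card_singleton]
  exact (Finset.eq_of_subset_of_card_le hsub (by rw [T.sides_card, hcard])).symm

lemma inOmega_zt {f : T.F} (Z : Zigzag T) (i : ℤ) (hz : Z.edge i ∈ T.sides f) :
    InOmega T f (zt Z i) := ⟨hz, ends_pair Z i, Z.tail_ne_head i⟩

/-- classification of the six oriented sides of the face -/
lemma omega_six {x : OSide T} (hx : InOmega T C.f x) :
    x = C.u₁ ∨ x = C.u₂ ∨ x = C.u₃ ∨ x = C.u₁.neg ∨ x = C.u₂.neg ∨ x = C.u₃.neg := by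
  obtain ⟨he, hends, hab⟩ := hx
  rw [sides_eq C] at he
  rcases Finset.mem_insert.mp he with h | h
  · rw [h, ends1 C] at hends
    rcases pair_eq hends.symm hab with ⟨h1, h2⟩ | ⟨h1, h2⟩
    · exact Or.inl (oside_ext h h1 (h2.trans (b1 C).symm))
    · refine Or.inr (Or.inr (Or.inr (Or.inl (oside_ext h ?_ h2))))
      rw [neg_a, b1 C]; exact h1
  rcases Finset.mem_insert.mp h with h | h
  · rw [h, ends2 C] at hends
    rcases pair_eq hends.symm hab with ⟨h1, h2⟩ | ⟨h1, h2⟩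
    · exact Or.inr (Or.inl (oside_ext h h1 (h2.trans (b2 C).symm)))
    · refine Or.inr (Or.inr (Or.inr (Or.inr (Or.inl (oside_ext h ?_ h2)))))
      rw [neg_a, b2 C]; exact h1
  · rw [Finset.mem_singleton.mp h, ends3 C] at hends
    have h' := Finset.mem_singleton.mp h
    rcases pair_eq hends.symm hab with ⟨h1, h2⟩ | ⟨h1, h2⟩
    · exact Or.inr (Or.inr (Or.inl (oside_ext h' h1 (h2.trans (b3 C).symm))))
    · refine Or.inr (Or.inr (Or.inr (Or.inr (Or.inr (oside_ext h' ?_ h2)))))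
      rw [neg_a, b3 C]; exact h1

/-- value of the rotation `D_F` -/
lemma D_val {x y : OSide T} (hd : DRel T C.f x y) :
    (x = C.u₁ ∧ y = C.u₂) ∨ (x = C.u₂ ∧ y = C.u₃) ∨ (x = C.u₃ ∧ y = C.u₁) ∨
    (x = C.u₁.neg ∧ y = C.u₃.neg) ∨ (x = C.u₂.neg ∧ y = C.u₁.neg) ∨
    (x = C.u₃.neg ∧ y = C.u₂.neg) := by
  have h12 := nee12 C; have h23 := nee23 C; have h31 := nee31 C
  have m12 := na12 C; have m23 := na23 C; have m31 := na31 C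
  have hb1 := b1 C; have hb2 := b2 C; have hb3 := b3 C
  obtain ⟨hx, hy, hne, hba⟩ := hd
  rcases omega_six C hx with h | h | h | h | h | h <;> subst h <;>
    rcases omega_six C hy with h | h | h | h | h | h <;> subst h <;>
    first
      | exact absurd rfl hne
      | simp_all

end M6

namespace M6

variable {T : Triang} (C : Ctx T)

lemma D_next1 {y : OSide T} (hd : DRel T C.f C.u₁ y) : y = C.u₂ := by
  rcases D_val C hd with ⟨h, h'⟩ | ⟨h, h'⟩ | ⟨h, h'⟩ | ⟨h, h'⟩ | ⟨h, h'⟩ | ⟨h, h'⟩ <;>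
    first
      | exact h'
      | exact absurd (congrArg OSide.e h) (nee12 C)
      | exact absurd (congrArg OSide.e h) (nee23 C)
      | exact absurd (congrArg OSide.e h) (nee31 C)
      | exact absurd (congrArg OSide.e h) (nee13 C)
      | exact absurd (congrArg OSide.e h) (Ne.symm (nee12 C))
      | exact absurd (congrArg OSide.e h) (Ne.symm (nee23 C))
      | exact absurd (congrArg OSide.e h) (Ne.symm (nee31 C))
      | exact absurd (congrArg OSide.e h) (Ne.symm (nee13 C))
      | exact absurd (congrArg OSide.a h) ((in1 C).2.2)
      | exact absurd (congrArg OSide.a h) ((in2 C).2.2)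
      | exact absurd (congrArg OSide.a h) ((in3 C).2.2)
      | exact absurd (congrArg OSide.a h) (Ne.symm ((in1 C).2.2))
      | exact absurd (congrArg OSide.a h) (Ne.symm ((in2 C).2.2))
      | exact absurd (congrArg OSide.a h) (Ne.symm ((in3 C).2.2))
lemma D_next2 {y : OSide T} (hd : DRel T C.f C.u₂ y) : y = C.u₃ := by
  rcases D_val C hd with ⟨h, h'⟩ | ⟨h, h'⟩ | ⟨h, h'⟩ | ⟨h, h'⟩ | ⟨h, h'⟩ | ⟨h, h'⟩ <;>
    first
      | exact h'
      | exact absurd (congrArg OSide.e h) (nee12 C)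
      | exact absurd (congrArg OSide.e h) (nee23 C)
      | exact absurd (congrArg OSide.e h) (nee31 C)
      | exact absurd (congrArg OSide.e h) (nee13 C)
      | exact absurd (congrArg OSide.e h) (Ne.symm (nee12 C))
      | exact absurd (congrArg OSide.e h) (Ne.symm (nee23 C))
      | exact absurd (congrArg OSide.e h) (Ne.symm (nee31 C))
      | exact absurd (congrArg OSide.e h) (Ne.symm (nee13 C))
      | exact absurd (congrArg OSide.a h) ((in1 C).2.2)
      | exact absurd (congrArg OSide.a h) ((in2 C).2.2)
      | exact absurd (congrArg OSide.a h) ((in3 C).2.2)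
      | exact absurd (congrArg OSide.a h) (Ne.symm ((in1 C).2.2))
      | exact absurd (congrArg OSide.a h) (Ne.symm ((in2 C).2.2))
      | exact absurd (congrArg OSide.a h) (Ne.symm ((in3 C).2.2))
lemma D_next3 {y : OSide T} (hd : DRel T C.f C.u₃ y) : y = C.u₁ := by
  rcases D_val C hd with ⟨h, h'⟩ | ⟨h, h'⟩ | ⟨h, h'⟩ | ⟨h, h'⟩ | ⟨h, h'⟩ | ⟨h, h'⟩ <;>
    first
      | exact h'
      | exact absurd (congrArg OSide.e h) (nee12 C)
      | exact absurd (congrArg OSide.e h) (nee23 C)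
      | exact absurd (congrArg OSide.e h) (nee31 C)
      | exact absurd (congrArg OSide.e h) (nee13 C)
      | exact absurd (congrArg OSide.e h) (Ne.symm (nee12 C))
      | exact absurd (congrArg OSide.e h) (Ne.symm (nee23 C))
      | exact absurd (congrArg OSide.e h) (Ne.symm (nee31 C))
      | exact absurd (congrArg OSide.e h) (Ne.symm (nee13 C))
      | exact absurd (congrArg OSide.a h) ((in1 C).2.2)
      | exact absurd (congrArg OSide.a h) ((in2 C).2.2)
      | exact absurd (congrArg OSide.a h) ((in3 C).2.2)
      | exact absurd (congrArg OSide.a h) (Ne.symm ((in1 C).2.2))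
      | exact absurd (congrArg OSide.a h) (Ne.symm ((in2 C).2.2))
      | exact absurd (congrArg OSide.a h) (Ne.symm ((in3 C).2.2))
lemma D_next1' {y : OSide T} (hd : DRel T C.f C.u₁.neg y) : y = C.u₃.neg := by
  rcases D_val C hd with ⟨h, h'⟩ | ⟨h, h'⟩ | ⟨h, h'⟩ | ⟨h, h'⟩ | ⟨h, h'⟩ | ⟨h, h'⟩ <;>
    first
      | exact h'
      | exact absurd (congrArg OSide.e h) (nee12 C)
      | exact absurd (congrArg OSide.e h) (nee23 C)
      | exact absurd (congrArg OSide.e h) (nee31 C)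
      | exact absurd (congrArg OSide.e h) (nee13 C)
      | exact absurd (congrArg OSide.e h) (Ne.symm (nee12 C))
      | exact absurd (congrArg OSide.e h) (Ne.symm (nee23 C))
      | exact absurd (congrArg OSide.e h) (Ne.symm (nee31 C))
      | exact absurd (congrArg OSide.e h) (Ne.symm (nee13 C))
      | exact absurd (congrArg OSide.a h) ((in1 C).2.2)
      | exact absurd (congrArg OSide.a h) ((in2 C).2.2)
      | exact absurd (congrArg OSide.a h) ((in3 C).2.2)
      | exact absurd (congrArg OSide.a h) (Ne.symm ((in1 C).2.2))
      | exact absurd (congrArg OSide.a h) (Ne.symm ((in2 C).2.2))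
      | exact absurd (congrArg OSide.a h) (Ne.symm ((in3 C).2.2))
lemma D_next2' {y : OSide T} (hd : DRel T C.f C.u₂.neg y) : y = C.u₁.neg := by
  rcases D_val C hd with ⟨h, h'⟩ | ⟨h, h'⟩ | ⟨h, h'⟩ | ⟨h, h'⟩ | ⟨h, h'⟩ | ⟨h, h'⟩ <;>
    first
      | exact h'
      | exact absurd (congrArg OSide.e h) (nee12 C)
      | exact absurd (congrArg OSide.e h) (nee23 C)
      | exact absurd (congrArg OSide.e h) (nee31 C)
      | exact absurd (congrArg OSide.e h) (nee13 C)
      | exact absurd (congrArg OSide.e h) (Ne.symm (nee12 C))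
      | exact absurd (congrArg OSide.e h) (Ne.symm (nee23 C))
      | exact absurd (congrArg OSide.e h) (Ne.symm (nee31 C))
      | exact absurd (congrArg OSide.e h) (Ne.symm (nee13 C))
      | exact absurd (congrArg OSide.a h) ((in1 C).2.2)
      | exact absurd (congrArg OSide.a h) ((in2 C).2.2)
      | exact absurd (congrArg OSide.a h) ((in3 C).2.2)
      | exact absurd (congrArg OSide.a h) (Ne.symm ((in1 C).2.2))
      | exact absurd (congrArg OSide.a h) (Ne.symm ((in2 C).2.2))
      | exact absurd (congrArg OSide.a h) (Ne.symm ((in3 C).2.2))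
lemma D_next3' {y : OSide T} (hd : DRel T C.f C.u₃.neg y) : y = C.u₂.neg := by
  rcases D_val C hd with ⟨h, h'⟩ | ⟨h, h'⟩ | ⟨h, h'⟩ | ⟨h, h'⟩ | ⟨h, h'⟩ | ⟨h, h'⟩ <;>
    first
      | exact h'
      | exact absurd (congrArg OSide.e h) (nee12 C)
      | exact absurd (congrArg OSide.e h) (nee23 C)
      | exact absurd (congrArg OSide.e h) (nee31 C)
      | exact absurd (congrArg OSide.e h) (nee13 C)
      | exact absurd (congrArg OSide.e h) (Ne.symm (nee12 C))
      | exact absurd (congrArg OSide.e h) (Ne.symm (nee23 C))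
      | exact absurd (congrArg OSide.e h) (Ne.symm (nee31 C))
      | exact absurd (congrArg OSide.e h) (Ne.symm (nee13 C))
      | exact absurd (congrArg OSide.a h) ((in1 C).2.2)
      | exact absurd (congrArg OSide.a h) ((in2 C).2.2)
      | exact absurd (congrArg OSide.a h) ((in3 C).2.2)
      | exact absurd (congrArg OSide.a h) (Ne.symm ((in1 C).2.2))
      | exact absurd (congrArg OSide.a h) (Ne.symm ((in2 C).2.2))
      | exact absurd (congrArg OSide.a h) (Ne.symm ((in3 C).2.2))
lemma D_prev1 {x : OSide T} (hd : DRel T C.f x C.u₁) : x = C.u₃ := by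
  rcases D_val C hd with ⟨h, h'⟩ | ⟨h, h'⟩ | ⟨h, h'⟩ | ⟨h, h'⟩ | ⟨h, h'⟩ | ⟨h, h'⟩ <;>
    first
      | exact h
      | exact absurd (congrArg OSide.e h') (nee12 C)
      | exact absurd (congrArg OSide.e h') (nee23 C)
      | exact absurd (congrArg OSide.e h') (nee31 C)
      | exact absurd (congrArg OSide.e h') (nee13 C)
      | exact absurd (congrArg OSide.e h') (Ne.symm (nee12 C))
      | exact absurd (congrArg OSide.e h') (Ne.symm (nee23 C))
      | exact absurd (congrArg OSide.e h') (Ne.symm (nee31 C))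
      | exact absurd (congrArg OSide.e h') (Ne.symm (nee13 C))
      | exact absurd (congrArg OSide.a h') ((in1 C).2.2)
      | exact absurd (congrArg OSide.a h') ((in2 C).2.2)
      | exact absurd (congrArg OSide.a h') ((in3 C).2.2)
      | exact absurd (congrArg OSide.a h') (Ne.symm ((in1 C).2.2))
      | exact absurd (congrArg OSide.a h') (Ne.symm ((in2 C).2.2))
      | exact absurd (congrArg OSide.a h') (Ne.symm ((in3 C).2.2))
lemma D_prev2 {x : OSide T} (hd : DRel T C.f x C.u₂) : x = C.u₁ := by
  rcases D_val C hd with ⟨h, h'⟩ | ⟨h, h'⟩ | ⟨h, h'⟩ | ⟨h, h'⟩ | ⟨h, h'⟩ | ⟨h, h'⟩ <;>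
    first
      | exact h
      | exact absurd (congrArg OSide.e h') (nee12 C)
      | exact absurd (congrArg OSide.e h') (nee23 C)
      | exact absurd (congrArg OSide.e h') (nee31 C)
      | exact absurd (congrArg OSide.e h') (nee13 C)
      | exact absurd (congrArg OSide.e h') (Ne.symm (nee12 C))
      | exact absurd (congrArg OSide.e h') (Ne.symm (nee23 C))
      | exact absurd (congrArg OSide.e h') (Ne.symm (nee31 C))
      | exact absurd (congrArg OSide.e h') (Ne.symm (nee13 C))
      | exact absurd (congrArg OSide.a h') ((in1 C).2.2)
      | exact absurd (congrArg OSide.a h') ((in2 C).2.2)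
      | exact absurd (congrArg OSide.a h') ((in3 C).2.2)
      | exact absurd (congrArg OSide.a h') (Ne.symm ((in1 C).2.2))
      | exact absurd (congrArg OSide.a h') (Ne.symm ((in2 C).2.2))
      | exact absurd (congrArg OSide.a h') (Ne.symm ((in3 C).2.2))
lemma D_prev3 {x : OSide T} (hd : DRel T C.f x C.u₃) : x = C.u₂ := by
  rcases D_val C hd with ⟨h, h'⟩ | ⟨h, h'⟩ | ⟨h, h'⟩ | ⟨h, h'⟩ | ⟨h, h'⟩ | ⟨h, h'⟩ <;>
    first
      | exact h
      | exact absurd (congrArg OSide.e h') (nee12 C)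
      | exact absurd (congrArg OSide.e h') (nee23 C)
      | exact absurd (congrArg OSide.e h') (nee31 C)
      | exact absurd (congrArg OSide.e h') (nee13 C)
      | exact absurd (congrArg OSide.e h') (Ne.symm (nee12 C))
      | exact absurd (congrArg OSide.e h') (Ne.symm (nee23 C))
      | exact absurd (congrArg OSide.e h') (Ne.symm (nee31 C))
      | exact absurd (congrArg OSide.e h') (Ne.symm (nee13 C))
      | exact absurd (congrArg OSide.a h') ((in1 C).2.2)
      | exact absurd (congrArg OSide.a h') ((in2 C).2.2)
      | exact absurd (congrArg OSide.a h') ((in3 C).2.2)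
      | exact absurd (congrArg OSide.a h') (Ne.symm ((in1 C).2.2))
      | exact absurd (congrArg OSide.a h') (Ne.symm ((in2 C).2.2))
      | exact absurd (congrArg OSide.a h') (Ne.symm ((in3 C).2.2))
lemma D_prev1' {x : OSide T} (hd : DRel T C.f x C.u₁.neg) : x = C.u₂.neg := by
  rcases D_val C hd with ⟨h, h'⟩ | ⟨h, h'⟩ | ⟨h, h'⟩ | ⟨h, h'⟩ | ⟨h, h'⟩ | ⟨h, h'⟩ <;>
    first
      | exact h
      | exact absurd (congrArg OSide.e h') (nee12 C)
      | exact absurd (congrArg OSide.e h') (nee23 C)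
      | exact absurd (congrArg OSide.e h') (nee31 C)
      | exact absurd (congrArg OSide.e h') (nee13 C)
      | exact absurd (congrArg OSide.e h') (Ne.symm (nee12 C))
      | exact absurd (congrArg OSide.e h') (Ne.symm (nee23 C))
      | exact absurd (congrArg OSide.e h') (Ne.symm (nee31 C))
      | exact absurd (congrArg OSide.e h') (Ne.symm (nee13 C))
      | exact absurd (congrArg OSide.a h') ((in1 C).2.2)
      | exact absurd (congrArg OSide.a h') ((in2 C).2.2)
      | exact absurd (congrArg OSide.a h') ((in3 C).2.2)
      | exact absurd (congrArg OSide.a h') (Ne.symm ((in1 C).2.2))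
      | exact absurd (congrArg OSide.a h') (Ne.symm ((in2 C).2.2))
      | exact absurd (congrArg OSide.a h') (Ne.symm ((in3 C).2.2))
lemma D_prev2' {x : OSide T} (hd : DRel T C.f x C.u₂.neg) : x = C.u₃.neg := by
  rcases D_val C hd with ⟨h, h'⟩ | ⟨h, h'⟩ | ⟨h, h'⟩ | ⟨h, h'⟩ | ⟨h, h'⟩ | ⟨h, h'⟩ <;>
    first
      | exact h
      | exact absurd (congrArg OSide.e h') (nee12 C)
      | exact absurd (congrArg OSide.e h') (nee23 C)
      | exact absurd (congrArg OSide.e h') (nee31 C)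
      | exact absurd (congrArg OSide.e h') (nee13 C)
      | exact absurd (congrArg OSide.e h') (Ne.symm (nee12 C))
      | exact absurd (congrArg OSide.e h') (Ne.symm (nee23 C))
      | exact absurd (congrArg OSide.e h') (Ne.symm (nee31 C))
      | exact absurd (congrArg OSide.e h') (Ne.symm (nee13 C))
      | exact absurd (congrArg OSide.a h') ((in1 C).2.2)
      | exact absurd (congrArg OSide.a h') ((in2 C).2.2)
      | exact absurd (congrArg OSide.a h') ((in3 C).2.2)
      | exact absurd (congrArg OSide.a h') (Ne.symm ((in1 C).2.2))
      | exact absurd (congrArg OSide.a h') (Ne.symm ((in2 C).2.2))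
      | exact absurd (congrArg OSide.a h') (Ne.symm ((in3 C).2.2))
lemma D_prev3' {x : OSide T} (hd : DRel T C.f x C.u₃.neg) : x = C.u₁.neg := by
  rcases D_val C hd with ⟨h, h'⟩ | ⟨h, h'⟩ | ⟨h, h'⟩ | ⟨h, h'⟩ | ⟨h, h'⟩ | ⟨h, h'⟩ <;>
    first
      | exact h
      | exact absurd (congrArg OSide.e h') (nee12 C)
      | exact absurd (congrArg OSide.e h') (nee23 C)
      | exact absurd (congrArg OSide.e h') (nee31 C)
      | exact absurd (congrArg OSide.e h') (nee13 C)
      | exact absurd (congrArg OSide.e h') (Ne.symm (nee12 C))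
      | exact absurd (congrArg OSide.e h') (Ne.symm (nee23 C))
      | exact absurd (congrArg OSide.e h') (Ne.symm (nee31 C))
      | exact absurd (congrArg OSide.e h') (Ne.symm (nee13 C))
      | exact absurd (congrArg OSide.a h') ((in1 C).2.2)
      | exact absurd (congrArg OSide.a h') ((in2 C).2.2)
      | exact absurd (congrArg OSide.a h') ((in3 C).2.2)
      | exact absurd (congrArg OSide.a h') (Ne.symm ((in1 C).2.2))
      | exact absurd (congrArg OSide.a h') (Ne.symm ((in2 C).2.2))
      | exact absurd (congrArg OSide.a h') (Ne.symm ((in3 C).2.2))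

lemma ztDRel (Z : Zigzag T) (i : ℤ) (hf : Z.face i = C.f) :
    DRel T C.f (zt Z i) (zt Z (i + 1)) :=
  ⟨inOmega_zt Z i (hf ▸ Z.edge_mem i), inOmega_zt Z (i + 1) (hf ▸ Z.edge_succ_mem i),
    Z.edge_ne_succ i, Z.link i⟩

lemma ztDRel' (Z : Zigzag T) (i : ℤ) (hf : Z.face (i - 1) = C.f) :
    DRel T C.f (zt Z (i - 1)) (zt Z i) := by
  have := ztDRel C Z (i - 1) hf
  rwa [sub_add_cancel] at this

end M6

set_option linter.unreachableTactic false
set_option linter.unusedTactic false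

namespace M6

variable {T : Triang} (C : Ctx T) (τ : ZOrientation T)

/-- `x` occurs in some zigzag of `τ` as the first side of a visit of the face. -/
def Vis (C : Ctx T) (τ : ZOrientation T) (x : OSide T) : Prop :=
  ∃ Z ∈ τ.zz, ∃ i : ℤ, zt Z i = x ∧ Z.face i = C.f

/-- the inner property of `IsM6` -/
def M6prop (C : Ctx T) : Prop :=
  ∀ u u' : OSide T, InOmega T C.f u → InOmega T C.f u' →
      (MRel T C.f u u' ↔
        ((u = C.u₁.neg ∧ u' = C.u₃) ∨ (u = C.u₃ ∧ u' = C.u₂) ∨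
         (u = C.u₂ ∧ u' = C.u₁.neg) ∨
         (u = C.u₂.neg ∧ u' = C.u₃.neg) ∨ (u = C.u₃.neg ∧ u' = C.u₁) ∨
         (u = C.u₁ ∧ u' = C.u₂.neg)))

/-- after a visit of the face, the zigzag comes back to the face, and the
first return is governed by the z-monodromy. -/
lemma next_visit (Z : Zigzag T) (i : ℤ) (hf : Z.face i = C.f) :
    ∃ j : ℤ, i + 1 < j ∧ Z.face j = C.f ∧ MRel T C.f (zt Z (i + 1)) (zt Z j) := by
  classical
  have hd : DRel T C.f (zt Z i) (zt Z (i + 1)) := ztDRel C Z i hf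
  have hEx : ∃ m : ℕ, Z.edge (i + 2 + m) ∈ T.sides C.f := by
    refine ⟨Z.n - 1, ?_⟩
    have hn := Z.npos
    have harith : i + 2 + ((Z.n - 1 : ℕ) : ℤ) = (i + 1) + Z.n := by push_cast; omega
    rw [harith, Z.per_edge]
    exact hd.2.1.1
  set mf := Nat.find hEx with hmf
  set j : ℤ := i + 2 + (mf : ℤ) with hj
  have hj_edge : Z.edge j ∈ T.sides C.f := Nat.find_spec hEx
  have hij : i + 1 < j := by
    have : (0 : ℤ) ≤ (mf : ℤ) := Int.natCast_nonneg mf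
    omega
  have hbet : ∀ k : ℤ, i + 1 < k → k < j → Z.edge k ∉ T.sides C.f := by
    intro k h1 h2 hc
    have hk0 : 0 ≤ k - (i + 2) := by omega
    set m' := (k - (i + 2)).toNat with hm'
    have hcast : (m' : ℤ) = k - (i + 2) := Int.toNat_of_nonneg hk0
    have hlt : m' < mf := by
      have : (m' : ℤ) < (mf : ℤ) := by omega
      exact_mod_cast this
    have := Nat.find_min hEx hlt
    apply this
    have : i + 2 + (m' : ℤ) = k := by omega
    rwa [this]
  have hfj : Z.face j = C.f := by
    rcases face_or C.f Z j hj_edge with ⟨h1, _⟩ | ⟨h1, _⟩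
    · exact h1
    · exfalso
      have hedge : Z.edge (j - 1) ∈ T.sides C.f := by
        have := Z.edge_mem (j - 1)
        rwa [h1] at this
      by_cases hm0 : mf = 0
      · have : j - 1 = i + 1 := by omega
        rw [this] at h1
        exact Z.face_ne_succ i (hf.trans h1.symm)
      · have h1' : i + 1 < j - 1 := by
          have : 1 ≤ (mf : ℤ) := by exact_mod_cast Nat.one_le_iff_ne_zero.mpr hm0
          omega
        exact hbet (j - 1) h1' (by omega) hedge
  refine ⟨j, hij, hfj, hd.2.1, inOmega_zt Z j hj_edge, Z, zt Z i, i + 1, j, hd, ?_, ⟨rfl, rfl, rfl⟩, hij, ⟨rfl, rfl, rfl⟩, hbet⟩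
  have : i + 1 - 1 = i := by ring
  rw [this]
  exact ⟨rfl, rfl, rfl⟩

lemma vis_step1 (hM : M6prop C) (hx : Vis C τ C.u₁) : Vis C τ C.u₁.neg := by
  obtain ⟨Z, hZ, i, hzt, hface⟩ := hx
  obtain ⟨j, hij, hfj, hM'⟩ := next_visit C Z i hface
  have hy : zt Z (i + 1) = C.u₂ := by
    have hd := ztDRel C Z i hface
    rw [hzt] at hd
    exact D_next1 C hd
  rw [hy] at hM'
  have h6 := (hM _ _ hM'.1 hM'.2.1).mp hM'
  have hj' : zt Z j = C.u₁.neg := by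
    rcases h6 with ⟨h, h'⟩ | ⟨h, h'⟩ | ⟨h, h'⟩ | ⟨h, h'⟩ | ⟨h, h'⟩ | ⟨h, h'⟩ <;>
      first
      | exact h'
      | exact absurd (congrArg OSide.e h) (nee12 C)
      | exact absurd (congrArg OSide.e h) (nee23 C)
      | exact absurd (congrArg OSide.e h) (nee31 C)
      | exact absurd (congrArg OSide.e h) (nee13 C)
      | exact absurd (congrArg OSide.e h) (Ne.symm (nee12 C))
      | exact absurd (congrArg OSide.e h) (Ne.symm (nee23 C))
      | exact absurd (congrArg OSide.e h) (Ne.symm (nee31 C))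
      | exact absurd (congrArg OSide.e h) (Ne.symm (nee13 C))
      | exact absurd (congrArg OSide.a h) ((in1 C).2.2)
      | exact absurd (congrArg OSide.a h) ((in2 C).2.2)
      | exact absurd (congrArg OSide.a h) ((in3 C).2.2)
      | exact absurd (congrArg OSide.a h) (Ne.symm ((in1 C).2.2))
      | exact absurd (congrArg OSide.a h) (Ne.symm ((in2 C).2.2))
      | exact absurd (congrArg OSide.a h) (Ne.symm ((in3 C).2.2))
  exact ⟨Z, hZ, j, hj', hfj⟩

lemma vis_step1' (hM : M6prop C) (hx : Vis C τ C.u₁.neg) : Vis C τ C.u₁ := by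
  obtain ⟨Z, hZ, i, hzt, hface⟩ := hx
  obtain ⟨j, hij, hfj, hM'⟩ := next_visit C Z i hface
  have hy : zt Z (i + 1) = C.u₃.neg := by
    have hd := ztDRel C Z i hface
    rw [hzt] at hd
    exact D_next1' C hd
  rw [hy] at hM'
  have h6 := (hM _ _ hM'.1 hM'.2.1).mp hM'
  have hj' : zt Z j = C.u₁ := by
    rcases h6 with ⟨h, h'⟩ | ⟨h, h'⟩ | ⟨h, h'⟩ | ⟨h, h'⟩ | ⟨h, h'⟩ | ⟨h, h'⟩ <;>
      first
      | exact h'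
      | exact absurd (congrArg OSide.e h) (nee12 C)
      | exact absurd (congrArg OSide.e h) (nee23 C)
      | exact absurd (congrArg OSide.e h) (nee31 C)
      | exact absurd (congrArg OSide.e h) (nee13 C)
      | exact absurd (congrArg OSide.e h) (Ne.symm (nee12 C))
      | exact absurd (congrArg OSide.e h) (Ne.symm (nee23 C))
      | exact absurd (congrArg OSide.e h) (Ne.symm (nee31 C))
      | exact absurd (congrArg OSide.e h) (Ne.symm (nee13 C))
      | exact absurd (congrArg OSide.a h) ((in1 C).2.2)
      | exact absurd (congrArg OSide.a h) ((in2 C).2.2)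
      | exact absurd (congrArg OSide.a h) ((in3 C).2.2)
      | exact absurd (congrArg OSide.a h) (Ne.symm ((in1 C).2.2))
      | exact absurd (congrArg OSide.a h) (Ne.symm ((in2 C).2.2))
      | exact absurd (congrArg OSide.a h) (Ne.symm ((in3 C).2.2))
  exact ⟨Z, hZ, j, hj', hfj⟩

lemma vis_step3 (hM : M6prop C) (hx : Vis C τ C.u₃) : Vis C τ C.u₂.neg := by
  obtain ⟨Z, hZ, i, hzt, hface⟩ := hx
  obtain ⟨j, hij, hfj, hM'⟩ := next_visit C Z i hface
  have hy : zt Z (i + 1) = C.u₁ := by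
    have hd := ztDRel C Z i hface
    rw [hzt] at hd
    exact D_next3 C hd
  rw [hy] at hM'
  have h6 := (hM _ _ hM'.1 hM'.2.1).mp hM'
  have hj' : zt Z j = C.u₂.neg := by
    rcases h6 with ⟨h, h'⟩ | ⟨h, h'⟩ | ⟨h, h'⟩ | ⟨h, h'⟩ | ⟨h, h'⟩ | ⟨h, h'⟩ <;>
      first
      | exact h'
      | exact absurd (congrArg OSide.e h) (nee12 C)
      | exact absurd (congrArg OSide.e h) (nee23 C)
      | exact absurd (congrArg OSide.e h) (nee31 C)
      | exact absurd (congrArg OSide.e h) (nee13 C)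
      | exact absurd (congrArg OSide.e h) (Ne.symm (nee12 C))
      | exact absurd (congrArg OSide.e h) (Ne.symm (nee23 C))
      | exact absurd (congrArg OSide.e h) (Ne.symm (nee31 C))
      | exact absurd (congrArg OSide.e h) (Ne.symm (nee13 C))
      | exact absurd (congrArg OSide.a h) ((in1 C).2.2)
      | exact absurd (congrArg OSide.a h) ((in2 C).2.2)
      | exact absurd (congrArg OSide.a h) ((in3 C).2.2)
      | exact absurd (congrArg OSide.a h) (Ne.symm ((in1 C).2.2))
      | exact absurd (congrArg OSide.a h) (Ne.symm ((in2 C).2.2))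
      | exact absurd (congrArg OSide.a h) (Ne.symm ((in3 C).2.2))
  exact ⟨Z, hZ, j, hj', hfj⟩

lemma vis_step2' (hM : M6prop C) (hx : Vis C τ C.u₂.neg) : Vis C τ C.u₃ := by
  obtain ⟨Z, hZ, i, hzt, hface⟩ := hx
  obtain ⟨j, hij, hfj, hM'⟩ := next_visit C Z i hface
  have hy : zt Z (i + 1) = C.u₁.neg := by
    have hd := ztDRel C Z i hface
    rw [hzt] at hd
    exact D_next2' C hd
  rw [hy] at hM'
  have h6 := (hM _ _ hM'.1 hM'.2.1).mp hM'
  have hj' : zt Z j = C.u₃ := by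
    rcases h6 with ⟨h, h'⟩ | ⟨h, h'⟩ | ⟨h, h'⟩ | ⟨h, h'⟩ | ⟨h, h'⟩ | ⟨h, h'⟩ <;>
      first
      | exact h'
      | exact absurd (congrArg OSide.e h) (nee12 C)
      | exact absurd (congrArg OSide.e h) (nee23 C)
      | exact absurd (congrArg OSide.e h) (nee31 C)
      | exact absurd (congrArg OSide.e h) (nee13 C)
      | exact absurd (congrArg OSide.e h) (Ne.symm (nee12 C))
      | exact absurd (congrArg OSide.e h) (Ne.symm (nee23 C))
      | exact absurd (congrArg OSide.e h) (Ne.symm (nee31 C))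
      | exact absurd (congrArg OSide.e h) (Ne.symm (nee13 C))
      | exact absurd (congrArg OSide.a h) ((in1 C).2.2)
      | exact absurd (congrArg OSide.a h) ((in2 C).2.2)
      | exact absurd (congrArg OSide.a h) ((in3 C).2.2)
      | exact absurd (congrArg OSide.a h) (Ne.symm ((in1 C).2.2))
      | exact absurd (congrArg OSide.a h) (Ne.symm ((in2 C).2.2))
      | exact absurd (congrArg OSide.a h) (Ne.symm ((in3 C).2.2))
  exact ⟨Z, hZ, j, hj', hfj⟩


end M6

namespace M6

variable {T : Triang} (C : Ctx T) (τ : ZOrientation T)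

/-- positions in one period of `Z` where `x` is traversed as first side of a visit -/
def aset (Z : Zigzag T) (f : T.F) (x : OSide T) : Finset ℕ :=
  (Finset.range Z.n).filter fun r => zt Z r = x ∧ Z.face r = f

/-- positions where `x` is traversed as second side of a visit -/
def bset (Z : Zigzag T) (f : T.F) (x : OSide T) : Finset ℕ :=
  (Finset.range Z.n).filter fun r => zt Z r = x ∧ Z.face ((r : ℤ) - 1) = f

def Acnt (τ : ZOrientation T) (f : T.F) (x : OSide T) : ℕ :=
  (τ.zz.map fun Z => (aset Z f x).card).sum

def Bcnt (τ : ZOrientation T) (f : T.F) (x : OSide T) : ℕ :=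
  (τ.zz.map fun Z => (bset Z f x).card).sum

lemma vis_iff {x : OSide T} : Vis C τ x ↔ 0 < Acnt τ C.f x := by
  constructor
  · rintro ⟨Z, hZ, i, h1, h2⟩
    have hn := Z.npos
    have hr0 : 0 ≤ i % (Z.n : ℤ) := Int.emod_nonneg i (by exact_mod_cast hn.ne')
    have hrn : i % (Z.n : ℤ) < Z.n := Int.emod_lt_of_pos i (by exact_mod_cast hn)
    set r : ℕ := (i % (Z.n : ℤ)).toNat with hrdef
    have hcast : (r : ℤ) = i % (Z.n : ℤ) := Int.toNat_of_nonneg hr0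
    have hmem : r ∈ aset Z C.f x := by
      refine Finset.mem_filter.mpr ⟨Finset.mem_range.mpr ?_, ?_, ?_⟩
      · have : (r : ℤ) < (Z.n : ℤ) := by rw [hcast]; exact hrn
        exact_mod_cast this
      · rw [show ((r : ℤ)) = i % (Z.n : ℤ) from hcast, ← zt_emod Z i]; exact h1
      · rw [show ((r : ℤ)) = i % (Z.n : ℤ) from hcast, ← face_emod Z i]; exact h2
    have hpos : 0 < (aset Z C.f x).card := Finset.card_pos.mpr ⟨r, hmem⟩
    have hmemmap : (aset Z C.f x).card ∈ τ.zz.map fun Z => (aset Z C.f x).card :=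
      List.mem_map_of_mem hZ
    exact lt_of_lt_of_le hpos (le_sum_of_mem hmemmap)
  · intro h
    obtain ⟨a, ha, hapos⟩ := pos_summand h
    obtain ⟨Z, hZ, rfl⟩ := List.mem_map.mp ha
    obtain ⟨r, hr⟩ := Finset.card_pos.mp hapos
    obtain ⟨-, h1, h2⟩ := Finset.mem_filter.mp hr
    exact ⟨Z, hZ, r, h1, h2⟩

end M6

namespace M6

variable {T : Triang} (C : Ctx T) (τ : ZOrientation T)

lemma mod_pred {n r : ℕ} (hn : 0 < n) (hr : r < n) :
    (r + n - 1) % n = if r = 0 then n - 1 else r - 1 := by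
  by_cases h0 : r = 0
  · subst h0; simp [Nat.mod_eq_of_lt (show n - 1 < n by omega)]
  · rw [if_neg h0, show r + n - 1 = (r - 1) + n by omega, Nat.add_mod_right,
      Nat.mod_eq_of_lt (by omega)]

lemma mod_succ {n s : ℕ} (hn : 0 < n) (hs : s < n) :
    (s + 1) % n = if s + 1 = n then 0 else s + 1 := by
  by_cases hend : s + 1 = n
  · rw [if_pos hend, hend, Nat.mod_self]
  · rw [if_neg hend, Nat.mod_eq_of_lt (by omega)]

/-- the shift bijection: second-of-visit positions for `y` correspond to
first-of-visit positions for `x`, when `y = D_F x`. -/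
lemma bset_card_eq (Z : Zigzag T) (x y : OSide T)
    (hfwd : ∀ i : ℤ, Z.face i = C.f → zt Z i = x → zt Z (i + 1) = y)
    (hbwd : ∀ i : ℤ, Z.face (i - 1) = C.f → zt Z i = y → zt Z (i - 1) = x) :
    (bset Z C.f y).card = (aset Z C.f x).card := by
  have hn := Z.npos
  apply Finset.card_bij' (i := fun r _ => (r + Z.n - 1) % Z.n)
    (j := fun s _ => (s + 1) % Z.n)
  · -- maps bset into aset
    intro r hr
    obtain ⟨hrange, h1, h2⟩ := Finset.mem_filter.mp hr
    have hrn : r < Z.n := Finset.mem_range.mp hrange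
    rw [mod_pred hn hrn]
    by_cases h0 : r = 0
    · subst h0
      rw [if_pos rfl]
      have hx : zt Z ((0 : ℤ) - 1) = x := hbwd 0 (by exact_mod_cast h2) (by exact_mod_cast h1)
      have hc1 : ((Z.n - 1 : ℕ) : ℤ) = (0 : ℤ) - 1 + Z.n := by omega
      refine Finset.mem_filter.mpr ⟨Finset.mem_range.mpr (by omega), ?_, ?_⟩
      · rw [hc1, zt_per]; exact hx
      · rw [hc1, Z.per_face]; exact_mod_cast h2
    · rw [if_neg h0]
      have hface : Z.face ((r : ℤ) - 1) = C.f := h2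
      have hx : zt Z ((r : ℤ) - 1) = x := hbwd r hface h1
      have hc : ((r - 1 : ℕ) : ℤ) = (r : ℤ) - 1 := by omega
      refine Finset.mem_filter.mpr ⟨Finset.mem_range.mpr (by omega), ?_, ?_⟩
      · rw [hc]; exact hx
      · rw [hc]; exact hface
  · -- maps aset into bset
    intro s hs
    obtain ⟨hrange, h1, h2⟩ := Finset.mem_filter.mp hs
    have hsn : s < Z.n := Finset.mem_range.mp hrange
    have hy : zt Z ((s : ℤ) + 1) = y := hfwd s h2 h1
    rw [mod_succ hn hsn]
    by_cases hend : s + 1 = Z.n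
    · rw [if_pos hend]
      have hc : ((s : ℤ) + 1) = (0 : ℤ) + Z.n := by omega
      refine Finset.mem_filter.mpr ⟨Finset.mem_range.mpr (by omega), ?_, ?_⟩
      · have := hy
        rw [hc, zt_per] at this
        exact_mod_cast this
      · have hp := Z.per_face ((s : ℤ) - Z.n)
        rw [show (s : ℤ) - Z.n + Z.n = (s : ℤ) by ring] at hp
        rw [show ((0 : ℕ) : ℤ) - 1 = (s : ℤ) - Z.n by omega]
        exact hp.symm.trans h2
    · rw [if_neg hend]
      refine Finset.mem_filter.mpr ⟨Finset.mem_range.mpr (by omega), ?_, ?_⟩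
      · have hc : ((s + 1 : ℕ) : ℤ) = (s : ℤ) + 1 := by omega
        rw [hc]; exact hy
      · have hc : ((s + 1 : ℕ) : ℤ) - 1 = (s : ℤ) := by omega
        rw [hc]; exact h2
  · intro r hr
    have hrn : r < Z.n := Finset.mem_range.mp (Finset.mem_filter.mp hr).1
    rw [mod_pred hn hrn]
    by_cases h0 : r = 0
    · rw [if_pos h0, mod_succ hn (by omega), if_pos (by omega)]; omega
    · rw [if_neg h0, mod_succ hn (by omega), if_neg (by omega)]; omega
  · intro s hs
    have hsn : s < Z.n := Finset.mem_range.mp (Finset.mem_filter.mp hs).1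
    rw [mod_succ hn hsn]
    by_cases hend : s + 1 = Z.n
    · rw [if_pos hend, mod_pred hn (by omega), if_pos rfl]; omega
    · rw [if_neg hend, mod_pred hn (by omega), if_neg (by omega)]; omega

end M6

namespace M6

variable {T : Triang} (C : Ctx T) (τ : ZOrientation T)

lemma Bcnt_eq_u2 : Bcnt τ C.f C.u₂ = Acnt τ C.f C.u₁ := by
  unfold Bcnt Acnt
  congr 1
  refine congrFun (congrArg List.map (funext fun Z => bset_card_eq C Z C.u₁ C.u₂ ?_ ?_)) τ.zz
  · intro i hf hz
    have hd := ztDRel C Z i hf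
    rw [hz] at hd
    exact D_next1 C hd
  · intro i hf hz
    have hd := ztDRel' C Z i hf
    rw [hz] at hd
    exact D_prev2 C hd

lemma Bcnt_eq_u3 : Bcnt τ C.f C.u₃ = Acnt τ C.f C.u₂ := by
  unfold Bcnt Acnt
  congr 1
  refine congrFun (congrArg List.map (funext fun Z => bset_card_eq C Z C.u₂ C.u₃ ?_ ?_)) τ.zz
  · intro i hf hz
    have hd := ztDRel C Z i hf
    rw [hz] at hd
    exact D_next2 C hd
  · intro i hf hz
    have hd := ztDRel' C Z i hf
    rw [hz] at hd
    exact D_prev3 C hd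

lemma Bcnt_eq_u1 : Bcnt τ C.f C.u₁ = Acnt τ C.f C.u₃ := by
  unfold Bcnt Acnt
  congr 1
  refine congrFun (congrArg List.map (funext fun Z => bset_card_eq C Z C.u₃ C.u₁ ?_ ?_)) τ.zz
  · intro i hf hz
    have hd := ztDRel C Z i hf
    rw [hz] at hd
    exact D_next3 C hd
  · intro i hf hz
    have hd := ztDRel' C Z i hf
    rw [hz] at hd
    exact D_prev1 C hd

lemma Bcnt_eq_u3n : Bcnt τ C.f C.u₃.neg = Acnt τ C.f C.u₁.neg := by
  unfold Bcnt Acnt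
  congr 1
  refine congrFun (congrArg List.map (funext fun Z => bset_card_eq C Z C.u₁.neg C.u₃.neg ?_ ?_)) τ.zz
  · intro i hf hz
    have hd := ztDRel C Z i hf
    rw [hz] at hd
    exact D_next1' C hd
  · intro i hf hz
    have hd := ztDRel' C Z i hf
    rw [hz] at hd
    exact D_prev3' C hd

lemma Bcnt_eq_u1n : Bcnt τ C.f C.u₁.neg = Acnt τ C.f C.u₂.neg := by
  unfold Bcnt Acnt
  congr 1
  refine congrFun (congrArg List.map (funext fun Z => bset_card_eq C Z C.u₂.neg C.u₁.neg ?_ ?_)) τ.zz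
  · intro i hf hz
    have hd := ztDRel C Z i hf
    rw [hz] at hd
    exact D_next2' C hd
  · intro i hf hz
    have hd := ztDRel' C Z i hf
    rw [hz] at hd
    exact D_prev1' C hd

lemma Bcnt_eq_u2n : Bcnt τ C.f C.u₂.neg = Acnt τ C.f C.u₃.neg := by
  unfold Bcnt Acnt
  congr 1
  refine congrFun (congrArg List.map (funext fun Z => bset_card_eq C Z C.u₃.neg C.u₂.neg ?_ ?_)) τ.zz
  · intro i hf hz
    have hd := ztDRel C Z i hf
    rw [hz] at hd
    exact D_next3' C hd
  · intro i hf hz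
    have hd := ztDRel' C Z i hf
    rw [hz] at hd
    exact D_prev2' C hd

end M6

namespace M6

variable {T : Triang} (C : Ctx T) (τ : ZOrientation T)

lemma zt_eq_iff {Z : Zigzag T} {i : ℤ} {x : OSide T} :
    zt Z i = x ↔ Z.edge i = x.e ∧ Z.tail i = x.a ∧ Z.head i = x.b := by
  constructor
  · intro h
    exact ⟨congrArg OSide.e h, congrArg OSide.a h, congrArg OSide.b h⟩
  · rintro ⟨h1, h2, h3⟩
    exact oside_ext h1 h2 h3

lemma inOmega_neg {f : T.F} {x : OSide T} (hx : InOmega T f x) : InOmega T f x.neg :=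
  ⟨hx.1, by rw [neg_e, hx.2.1]; exact Finset.pair_comm _ _, Ne.symm hx.2.2⟩

lemma dir_split (Z : Zigzag T) {x : OSide T} (hx : InOmega T C.f x) :
    ((Finset.range Z.n).filter fun r : ℕ => zt Z r = x).card
      = (aset Z C.f x).card + (bset Z C.f x).card := by
  classical
  have h := Finset.card_filter_add_card_filter_not
    (s := (Finset.range Z.n).filter fun r : ℕ => zt Z r = x) (p := fun r : ℕ => Z.face r = C.f)
  rw [Finset.filter_filter, Finset.filter_filter] at h
  have hcong : ((Finset.range Z.n).filter fun r : ℕ => zt Z r = x ∧ ¬(Z.face r = C.f))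
      = bset Z C.f x := by
    apply Finset.filter_congr
    intro r _
    constructor
    · rintro ⟨h1, h2⟩
      refine ⟨h1, ?_⟩
      rcases face_or C.f Z r (by rw [(zt_eq_iff.mp h1).1]; exact hx.1) with ⟨hf, _⟩ | ⟨hf, _⟩
      · exact absurd hf h2
      · exact hf
    · rintro ⟨h1, h2⟩
      refine ⟨h1, ?_⟩
      rcases face_or C.f Z r (by rw [(zt_eq_iff.mp h1).1]; exact hx.1) with ⟨_, hno⟩ | ⟨_, hno⟩
      · exact absurd h2 hno
      · exact hno
  rw [hcong] at h
  exact h.symm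

lemma edge_split (Z : Zigzag T) {x : OSide T} (hx : InOmega T C.f x) :
    ((Finset.range Z.n).filter fun r : ℕ => Z.edge r = x.e).card
      = ((Finset.range Z.n).filter fun r : ℕ => zt Z r = x).card
        + ((Finset.range Z.n).filter fun r : ℕ => zt Z r = x.neg).card := by
  classical
  have h := Finset.card_filter_add_card_filter_not
    (s := (Finset.range Z.n).filter fun r : ℕ => Z.edge r = x.e) (p := fun r : ℕ => Z.tail r = x.a)
  rw [Finset.filter_filter, Finset.filter_filter] at h
  have hdir : ∀ r : ℕ, Z.edge r = x.e →
      (Z.tail r = x.a ∧ Z.head r = x.b) ∨ (Z.tail r = x.b ∧ Z.head r = x.a) := by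
    intro r he
    have hp : ({Z.tail (r : ℤ), Z.head (r : ℤ)} : Finset T.V) = {x.a, x.b} := by
      rw [← ends_pair Z r, he, hx.2.1]
    exact pair_eq hp (Z.tail_ne_head r)
  have hc1 : ((Finset.range Z.n).filter fun r : ℕ => Z.edge r = x.e ∧ Z.tail r = x.a)
      = (Finset.range Z.n).filter fun r : ℕ => zt Z r = x := by
    apply Finset.filter_congr
    intro r _
    constructor
    · rintro ⟨h1, h2⟩
      rcases hdir r h1 with ⟨h3, h4⟩ | ⟨h3, h4⟩
      · exact oside_ext h1 h3 h4
      · exact absurd (h2.symm.trans h3) hx.2.2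
    · intro h1
      obtain ⟨h1, h2, h3⟩ := zt_eq_iff.mp h1
      exact ⟨h1, h2⟩
  have hc2 : ((Finset.range Z.n).filter fun r : ℕ => Z.edge r = x.e ∧ ¬(Z.tail r = x.a))
      = (Finset.range Z.n).filter fun r : ℕ => zt Z r = x.neg := by
    apply Finset.filter_congr
    intro r _
    constructor
    · rintro ⟨h1, h2⟩
      rcases hdir r h1 with ⟨h3, h4⟩ | ⟨h3, h4⟩
      · exact absurd h3 h2
      · exact oside_ext h1 h3 h4
    · intro h1
      obtain ⟨h1, h2, h3⟩ := zt_eq_iff.mp h1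
      refine ⟨h1, fun hc => hx.2.2 ?_⟩
      rw [← hc]
      exact h2
  rw [hc1, hc2] at h
  exact h.symm

lemma card_coe_filter (n : ℕ) (p : ℤ → Prop) [DecidablePred p] :
    (Finset.filter p (do let a ← Finset.range n; pure ((a : ℤ)))).card
      = (Finset.filter (fun r : ℕ => p r) (Finset.range n)).card := by
  have h1 : (do let a ← Finset.range n; pure ((a : ℤ)))
      = (Finset.range n).image (fun a : ℕ => (a : ℤ)) := by
    ext a
    simp [Bind.bind, Pure.pure, Finset.mem_biUnion]
  rw [h1, Finset.filter_image,
    Finset.card_image_of_injective _ (fun a b h => by exact_mod_cast h)]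

/-- the covering equation distributed over the four roles of an edge of the face -/
lemma covers_split {x : OSide T} (hx : InOmega T C.f x) :
    Acnt τ C.f x + Bcnt τ C.f x + Acnt τ C.f x.neg + Bcnt τ C.f x.neg = 2 := by
  have hc := τ.covers x.e
  have hfun : (fun Z : Zigzag T => Z.count x.e)
      = fun Z => ((aset Z C.f x).card + (bset Z C.f x).card)
        + ((aset Z C.f x.neg).card + (bset Z C.f x.neg).card) := by
    funext Z
    unfold Zigzag.count
    rw [card_coe_filter Z.n (fun i => Z.edge i = x.e),
      edge_split C Z hx, dir_split C Z hx, dir_split C Z (inOmega_neg hx)]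
  rw [hfun, sum_map_add, sum_map_add, sum_map_add] at hc
  unfold Acnt Bcnt
  omega

end M6

namespace M6

variable {T : Triang} (C : Ctx T) (τ : ZOrientation T)

lemma count_ofList (Z : Zigzag T) (e : T.E) (d : T.V × T.V) :
    Multiset.count d (Multiset.ofList (((List.range Z.n).filter fun i : ℕ => Z.edge i = e).map
        fun i : ℕ => (Z.tail i, Z.head i)))
      = ((Finset.range Z.n).filter
          fun r : ℕ => d = (Z.tail r, Z.head r) ∧ Z.edge r = e).card := by
  rw [show (Multiset.ofList (((List.range Z.n).filter fun i : ℕ => Z.edge i = e).map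
        fun i : ℕ => (Z.tail i, Z.head i)))
      = Multiset.map (fun i : ℕ => (Z.tail i, Z.head i))
          (Multiset.filter (fun i : ℕ => Z.edge i = e) (Multiset.range Z.n)) by
    rw [← Multiset.coe_range, Multiset.filter_coe, Multiset.map_coe]]
  rw [Multiset.count_map, Multiset.filter_filter]
  rw [Finset.card_def, Finset.filter_val, Finset.range_val]

lemma travs_perZ (Z : Zigzag T) {x : OSide T} (hx : InOmega T C.f x) :
    Multiset.count (x.a, x.b) (Multiset.ofList
        (((List.range Z.n).filter fun i : ℕ => Z.edge i = x.e).map fun i : ℕ => (Z.tail i, Z.head i)))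
      = (aset Z C.f x).card + (bset Z C.f x).card := by
  rw [count_ofList]
  have hcong : ((Finset.range Z.n).filter
      fun r : ℕ => (x.a, x.b) = (Z.tail r, Z.head r) ∧ Z.edge r = x.e)
      = (Finset.range Z.n).filter fun r : ℕ => zt Z r = x := by
    apply Finset.filter_congr
    intro r _
    rw [zt_eq_iff, Prod.mk.injEq]
    constructor
    · rintro ⟨⟨h1, h2⟩, h3⟩
      exact ⟨h3, h1.symm, h2.symm⟩
    · rintro ⟨h1, h2, h3⟩
      exact ⟨⟨h2.symm, h3.symm⟩, h1⟩
  rw [hcong]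
  exact dir_split C Z hx

lemma travs_count {x : OSide T} (hx : InOmega T C.f x) :
    Multiset.count (x.a, x.b) (τ.travs x.e) = Acnt τ C.f x + Bcnt τ C.f x := by
  unfold ZOrientation.travs
  rw [count_list_sum]
  have hfun : (fun Z : Zigzag T => Multiset.count (x.a, x.b) (Multiset.ofList
        (((List.range Z.n).filter fun i : ℕ => Z.edge i = x.e).map fun i : ℕ => (Z.tail i, Z.head i))))
      = fun Z => (aset Z C.f x).card + (bset Z C.f x).card :=
    funext fun Z => travs_perZ C Z hx
  rw [hfun, sum_map_add]
  rfl

lemma card_ofList_perZ (Z : Zigzag T) (e : T.E) :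
    Multiset.card (Multiset.ofList (((List.range Z.n).filter fun i : ℕ => Z.edge i = e).map
        fun i : ℕ => (Z.tail i, Z.head i))) = Z.count e := by
  rw [show (Multiset.ofList (((List.range Z.n).filter fun i : ℕ => Z.edge i = e).map
        fun i : ℕ => (Z.tail i, Z.head i)))
      = Multiset.map (fun i : ℕ => (Z.tail i, Z.head i))
          (Multiset.filter (fun i : ℕ => Z.edge i = e) (Multiset.range Z.n)) by
    rw [← Multiset.coe_range, Multiset.filter_coe, Multiset.map_coe]]
  rw [Multiset.card_map]
  unfold Zigzag.count
  rw [card_coe_filter Z.n (fun i => Z.edge i = e)]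
  rw [Finset.card_def, Finset.filter_val, Finset.range_val]

lemma card_travs (e : T.E) : Multiset.card (τ.travs e) = 2 := by
  unfold ZOrientation.travs
  rw [card_list_sum]
  have hfun : (fun Z : Zigzag T => Multiset.card (Multiset.ofList
        (((List.range Z.n).filter fun i : ℕ => Z.edge i = e).map fun i : ℕ => (Z.tail i, Z.head i))))
      = fun Z => Z.count e :=
    funext fun Z => card_ofList_perZ Z e
  rw [hfun]
  exact τ.covers e

end M6

namespace M6

variable {T : Triang} (C : Ctx T) (τ : ZOrientation T)

lemma travs_eq_two (e : T.E) (d : T.V × T.V)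
    (h2 : Multiset.count d (τ.travs e) = 2) : τ.travs e = {d, d} := by
  have hle : ({d, d} : Multiset (T.V × T.V)) ≤ τ.travs e := by
    rw [Multiset.le_iff_count]
    intro a
    by_cases ha : a = d
    · subst ha
      have hc : Multiset.count a ({a, a} : Multiset (T.V × T.V)) = 2 := by
        simp [Multiset.insert_eq_cons]
      rw [hc, h2]
    · have hc : Multiset.count a ({d, d} : Multiset (T.V × T.V)) = 0 := by
        simp [Multiset.insert_eq_cons, Multiset.count_cons, Multiset.count_singleton, ha]
      rw [hc]
      exact Nat.zero_le _
  have hcard : Multiset.card (τ.travs e) ≤ Multiset.card ({d, d} : Multiset (T.V × T.V)) := by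
    rw [card_travs τ e]
    simp [Multiset.insert_eq_cons]
  exact (Multiset.eq_of_le_of_card_le hle hcard).symm

lemma travs_eq_pair (e : T.E) (d d' : T.V × T.V) (hne : d ≠ d')
    (h1 : 1 ≤ Multiset.count d (τ.travs e)) (h1' : 1 ≤ Multiset.count d' (τ.travs e)) :
    τ.travs e = {d, d'} := by
  have hle : ({d, d'} : Multiset (T.V × T.V)) ≤ τ.travs e := by
    rw [Multiset.le_iff_count]
    intro a
    by_cases ha : a = d
    · subst ha
      have hc : Multiset.count a ({a, d'} : Multiset (T.V × T.V)) = 1 := by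
        simp [Multiset.insert_eq_cons, Multiset.count_cons, Multiset.count_singleton, hne]
      rw [hc]; exact h1
    · by_cases ha' : a = d'
      · subst ha'
        have hc : Multiset.count a ({d, a} : Multiset (T.V × T.V)) = 1 := by
          simp [Multiset.insert_eq_cons, Multiset.count_cons, Multiset.count_singleton,
            Ne.symm hne]
        rw [hc]; exact h1'
      · have hc : Multiset.count a ({d, d'} : Multiset (T.V × T.V)) = 0 := by
          simp [Multiset.insert_eq_cons, Multiset.count_cons, Multiset.count_singleton, ha, ha']
        rw [hc]
        exact Nat.zero_le _
  have hcard : Multiset.card (τ.travs e) ≤ Multiset.card ({d, d'} : Multiset (T.V × T.V)) := by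
    rw [card_travs τ e]
    simp [Multiset.insert_eq_cons]
  exact (Multiset.eq_of_le_of_card_le hle hcard).symm

lemma typeI_not_typeII {e : T.E} (h : τ.TypeI e) : ¬ τ.TypeII e := by
  obtain ⟨v, w, he, hvw⟩ := h
  rintro ⟨v', w', he'⟩
  rw [he] at he'
  have h1 : (v, w) ∈ ({(v', w'), (v', w')} : Multiset (T.V × T.V)) := by
    rw [← he']; simp
  have h2 : (w, v) ∈ ({(v', w'), (v', w')} : Multiset (T.V × T.V)) := by
    rw [← he']
    simp [Multiset.insert_eq_cons]
  simp only [Multiset.insert_eq_cons, Multiset.mem_cons, Multiset.mem_singleton,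
    or_self, Prod.mk.injEq] at h1 h2
  exact hvw (h1.1.trans h2.1.symm)

lemma faceTypeI_mk2 {eA eB eC : T.E} (hs : T.sides C.f = {eA, eB, eC})
    (h1 : τ.TypeI eA) (h2 : τ.TypeII eB) (h3 : τ.TypeI eC) : τ.FaceTypeI C.f := by
  constructor
  · have hfil : (T.sides C.f).filter (fun e => τ.TypeII e) = {eB} := by
      ext a
      simp only [Finset.mem_filter, hs, Finset.mem_insert, Finset.mem_singleton]
      constructor
      · rintro ⟨h | h | h, hII⟩
        · exact absurd hII (by rw [h]; exact typeI_not_typeII τ h1)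
        · exact h
        · exact absurd hII (by rw [h]; exact typeI_not_typeII τ h3)
      · rintro rfl
        exact ⟨Or.inr (Or.inl rfl), h2⟩
    rw [hfil, Finset.card_singleton]
  · intro e he
    rw [hs] at he
    rcases Finset.mem_insert.mp he with h | h
    · exact Or.inl (by rw [h]; exact h1)
    rcases Finset.mem_insert.mp h with h | h
    · exact Or.inr (by rw [h]; exact h2)
    · exact Or.inl (by rw [Finset.mem_singleton.mp h]; exact h3)

lemma faceTypeI_mk3 {eA eB eC : T.E} (hs : T.sides C.f = {eA, eB, eC})
    (h1 : τ.TypeI eA) (h2 : τ.TypeI eB) (h3 : τ.TypeII eC) : τ.FaceTypeI C.f := by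
  constructor
  · have hfil : (T.sides C.f).filter (fun e => τ.TypeII e) = {eC} := by
      ext a
      simp only [Finset.mem_filter, hs, Finset.mem_insert, Finset.mem_singleton]
      constructor
      · rintro ⟨h | h | h, hII⟩
        · exact absurd hII (by rw [h]; exact typeI_not_typeII τ h1)
        · exact absurd hII (by rw [h]; exact typeI_not_typeII τ h2)
        · exact h
      · rintro rfl
        exact ⟨Or.inr (Or.inr rfl), h3⟩
    rw [hfil, Finset.card_singleton]
  · intro e he
    rw [hs] at he
    rcases Finset.mem_insert.mp he with h | h
    · exact Or.inl (by rw [h]; exact h1)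
    rcases Finset.mem_insert.mp h with h | h
    · exact Or.inl (by rw [h]; exact h2)
    · exact Or.inr (by rw [Finset.mem_singleton.mp h]; exact h3)

/-- The main lemma: any z-orientation makes the face of type I. -/
lemma main (C : Ctx T) (hM : M6prop C) (τ : ZOrientation T) : τ.FaceTypeI C.f := by
  -- count equations
  have E1 := covers_split C τ (in1 C)
  have E2 := covers_split C τ (in2 C)
  have E3 := covers_split C τ (in3 C)
  rw [Bcnt_eq_u1 C τ, Bcnt_eq_u1n C τ] at E1
  rw [Bcnt_eq_u2 C τ, Bcnt_eq_u2n C τ] at E2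
  rw [Bcnt_eq_u3 C τ, Bcnt_eq_u3n C τ] at E3
  -- closure under the monodromy
  have hc1 : 0 < Acnt τ C.f C.u₁ → 0 < Acnt τ C.f C.u₁.neg :=
    fun hp => (vis_iff C τ).mp (vis_step1 C τ hM ((vis_iff C τ).mpr hp))
  have hc1' : 0 < Acnt τ C.f C.u₁.neg → 0 < Acnt τ C.f C.u₁ :=
    fun hp => (vis_iff C τ).mp (vis_step1' C τ hM ((vis_iff C τ).mpr hp))
  have hc3 : 0 < Acnt τ C.f C.u₃ → 0 < Acnt τ C.f C.u₂.neg :=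
    fun hp => (vis_iff C τ).mp (vis_step3 C τ hM ((vis_iff C τ).mpr hp))
  have hc2' : 0 < Acnt τ C.f C.u₂.neg → 0 < Acnt τ C.f C.u₃ :=
    fun hp => (vis_iff C τ).mp (vis_step2' C τ hM ((vis_iff C τ).mpr hp))
  -- solve the system
  have hA : (Acnt τ C.f C.u₁ = 1 ∧ Acnt τ C.f C.u₁.neg = 1 ∧
        Acnt τ C.f C.u₃ = 0 ∧ Acnt τ C.f C.u₂.neg = 0) ∨
      (Acnt τ C.f C.u₁ = 0 ∧ Acnt τ C.f C.u₁.neg = 0 ∧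
        Acnt τ C.f C.u₃ = 1 ∧ Acnt τ C.f C.u₂.neg = 1) := by
    rcases Nat.eq_zero_or_pos (Acnt τ C.f C.u₁) with h1 | h1
    · right
      have h1' : Acnt τ C.f C.u₁.neg = 0 := by
        rcases Nat.eq_zero_or_pos (Acnt τ C.f C.u₁.neg) with h | h
        · exact h
        · have := hc1' h; omega
      have h3 : 0 < Acnt τ C.f C.u₃ := by
        rcases Nat.eq_zero_or_pos (Acnt τ C.f C.u₃) with h | h
        · exfalso
          have h2' : 0 < Acnt τ C.f C.u₂.neg := by omega
          have := hc2' h2'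
          omega
        · exact h
      have h2' := hc3 h3
      omega
    · left
      have h1'' := hc1 h1
      omega
  have hA2 : Acnt τ C.f C.u₂ + Acnt τ C.f C.u₃.neg = 1 := by
    rcases hA with ⟨e1, e2, e3, e4⟩ | ⟨e1, e2, e3, e4⟩ <;> omega
  -- counts of directed traversals
  have hcnt1 : Multiset.count (C.u₁.a, C.u₁.b) (τ.travs C.u₁.e)
      = Acnt τ C.f C.u₁ + Acnt τ C.f C.u₃ := by
    rw [travs_count C τ (in1 C), Bcnt_eq_u1 C τ]
  have hcnt1' : Multiset.count (C.u₁.b, C.u₁.a) (τ.travs C.u₁.e)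
      = Acnt τ C.f C.u₁.neg + Acnt τ C.f C.u₂.neg := by
    have := travs_count C τ (inOmega_neg (in1 C))
    rw [Bcnt_eq_u1n C τ] at this
    exact this
  have hcnt2 : Multiset.count (C.u₂.a, C.u₂.b) (τ.travs C.u₂.e)
      = Acnt τ C.f C.u₂ + Acnt τ C.f C.u₁ := by
    rw [travs_count C τ (in2 C), Bcnt_eq_u2 C τ]
  have hcnt2' : Multiset.count (C.u₂.b, C.u₂.a) (τ.travs C.u₂.e)
      = Acnt τ C.f C.u₂.neg + Acnt τ C.f C.u₃.neg := by
    have := travs_count C τ (inOmega_neg (in2 C))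
    rw [Bcnt_eq_u2n C τ] at this
    exact this
  have hcnt3 : Multiset.count (C.u₃.a, C.u₃.b) (τ.travs C.u₃.e)
      = Acnt τ C.f C.u₃ + Acnt τ C.f C.u₂ := by
    rw [travs_count C τ (in3 C), Bcnt_eq_u3 C τ]
  have hcnt3' : Multiset.count (C.u₃.b, C.u₃.a) (τ.travs C.u₃.e)
      = Acnt τ C.f C.u₃.neg + Acnt τ C.f C.u₁.neg := by
    have := travs_count C τ (inOmega_neg (in3 C))
    rw [Bcnt_eq_u3n C τ] at this
    exact this
  -- edge 1 is always of type I
  have hI1 : τ.TypeI C.u₁.e := by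
    refine ⟨C.u₁.a, C.u₁.b, ?_, (in1 C).2.2⟩
    refine travs_eq_pair τ _ _ _ ?_ ?_ ?_
    · intro hd
      exact (in1 C).2.2 (congrArg Prod.fst hd)
    · rw [hcnt1]; rcases hA with ⟨e1, e2, e3, e4⟩ | ⟨e1, e2, e3, e4⟩ <;> omega
    · rw [hcnt1']; rcases hA with ⟨e1, e2, e3, e4⟩ | ⟨e1, e2, e3, e4⟩ <;> omega
  -- the other two edges depend on the case
  rcases Nat.eq_zero_or_pos (Acnt τ C.f C.u₂) with h2z | h2p
  · -- A₂ = 0, A₃' = 1 : edge 3 carries the type II edge... or edge 2, depending on hA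
    have h3' : Acnt τ C.f C.u₃.neg = 1 := by omega
    rcases hA with ⟨e1, e2, e3, e4⟩ | ⟨e1, e2, e3, e4⟩
    · -- A₁ = A₁' = 1, A₃ = A₂' = 0: e₂ : counts (0+1, 0+1) TypeI; e₃ : (0+0, 1+1) TypeII
      have hI2 : τ.TypeI C.u₂.e := by
        refine ⟨C.u₂.a, C.u₂.b, ?_, (in2 C).2.2⟩
        refine travs_eq_pair τ _ _ _ ?_ ?_ ?_
        · intro hd
          exact (in2 C).2.2 (congrArg Prod.fst hd)
        · rw [hcnt2]; omega
        · rw [hcnt2']; omega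
      have hII3 : τ.TypeII C.u₃.e := by
        refine ⟨C.u₃.b, C.u₃.a, ?_⟩
        refine travs_eq_two τ _ _ ?_
        rw [hcnt3']; omega
      exact faceTypeI_mk3 C τ (sides_eq C) hI1 hI2 hII3
    · -- A₃ = A₂' = 1, A₁ = A₁' = 0: e₂ : (0+0, 1+1) TypeII; e₃ : (1+0, 1+0) TypeI
      have hII2 : τ.TypeII C.u₂.e := by
        refine ⟨C.u₂.b, C.u₂.a, ?_⟩
        refine travs_eq_two τ _ _ ?_
        rw [hcnt2']; omega
      have hI3 : τ.TypeI C.u₃.e := by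
        refine ⟨C.u₃.a, C.u₃.b, ?_, (in3 C).2.2⟩
        refine travs_eq_pair τ _ _ _ ?_ ?_ ?_
        · intro hd
          exact (in3 C).2.2 (congrArg Prod.fst hd)
        · rw [hcnt3]; omega
        · rw [hcnt3']; omega
      exact faceTypeI_mk2 C τ (sides_eq C) hI1 hII2 hI3
  · -- A₂ = 1, A₃' = 0
    have h2 : Acnt τ C.f C.u₂ = 1 := by omega
    have h3' : Acnt τ C.f C.u₃.neg = 0 := by omega
    rcases hA with ⟨e1, e2, e3, e4⟩ | ⟨e1, e2, e3, e4⟩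
    · -- A₁ = A₁' = 1: e₂ : (1+1, 0+0) TypeII; e₃ : (0+1, 0+1) TypeI
      have hII2 : τ.TypeII C.u₂.e := by
        refine ⟨C.u₂.a, C.u₂.b, ?_⟩
        refine travs_eq_two τ _ _ ?_
        rw [hcnt2]; omega
      have hI3 : τ.TypeI C.u₃.e := by
        refine ⟨C.u₃.a, C.u₃.b, ?_, (in3 C).2.2⟩
        refine travs_eq_pair τ _ _ _ ?_ ?_ ?_
        · intro hd
          exact (in3 C).2.2 (congrArg Prod.fst hd)
        · rw [hcnt3]; omega
        · rw [hcnt3']; omega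
      exact faceTypeI_mk2 C τ (sides_eq C) hI1 hII2 hI3
    · -- A₃ = A₂' = 1: e₂ : (1+0, 1+0) TypeI; e₃ : (1+1, 0+0) TypeII
      have hI2 : τ.TypeI C.u₂.e := by
        refine ⟨C.u₂.a, C.u₂.b, ?_, (in2 C).2.2⟩
        refine travs_eq_pair τ _ _ _ ?_ ?_ ?_
        · intro hd
          exact (in2 C).2.2 (congrArg Prod.fst hd)
        · rw [hcnt2]; omega
        · rw [hcnt2']; omega
      have hII3 : τ.TypeII C.u₃.e := by
        refine ⟨C.u₃.a, C.u₃.b, ?_⟩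
        refine travs_eq_two τ _ _ ?_
        rw [hcnt3]; omega
      exact faceTypeI_mk3 C τ (sides_eq C) hI1 hI2 hII3

end M6


/-- If the z-monodromy of a face `F` is of type (M6), then `F` is of type I
for every z-orientation of the triangulation. -/
theorem stmt_12 (T : Triang) (f : T.F) (h : IsM6 T f) :
    ∀ τ : ZOrientation T, τ.FaceTypeI f := by
  obtain ⟨u₁, u₂, u₃, d12, d23, d31, hM⟩ := h
  intro τ
  exact M6.main ⟨f, u₁, u₂, u₃, d12, d23, d31⟩ hM τ
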